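/- arXiv:1402.2797 — 4 statements merged into one kernel-verified Lean document; each statement's English description precedes it below -/
import Mathlib

section
/- For the non-Markovian scheme X_{k+1} = (1 - αh) X_k + (σ√h/2)(ξ_k + ξ_{k+1}) applied to the Ornstein–Uhlenbeck process, with 0 < αh < 1, the variance satisfies Var(X_N) = (σ²/(2α)) · [1 - (1-αh)^{2N}/(1-αh)] for every N ≥ 1. -/
/-!
With `β = 1 - α h` and `c = σ √h / 2`, unrolling the recursion writes `X N` as
`β ^ N x₀ + ∑ i ≤ N, w N i • ξ i`, so by independence `Var (X N) = ∑ i ≤ N, (w N i)²`.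
Since the newest weight is always `w N N = c`, these sums of squares satisfy
`S (N + 1) = β² S N + 2c² (1 + β)` for `N ≥ 1`, with `S 1 = 2c²`; this is also the recursion of
`2c² (1 + β + ⋯ + β ^ (2N - 2)) = 2c² (1 - β ^ (2N - 1)) / (1 - β)`, and `2c² / (1 - β) = σ² / (2α)`.
-/

open MeasureTheory ProbabilityTheory Real Filter
open Finset

section AffineCombination

variable {Ω ι : Type*} [MeasurableSpace Ω] {μ : Measure Ω}

theorem variance_const_add_sum_mul [IsProbabilityMeasure μ] {ξ : ι → Ω → ℝ} {s : Finset ι}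
    (hξ : ∀ i ∈ s, MemLp (ξ i) 2 μ) (hindep : Set.Pairwise ↑s fun i j => ξ i ⟂ᵢ[μ] ξ j)
    (a : ℝ) (w : ι → ℝ) :
    Var[fun ω => a + ∑ i ∈ s, w i * ξ i ω; μ] = ∑ i ∈ s, w i ^ 2 * Var[ξ i; μ] := by
  have hsum : (fun ω => ∑ i ∈ s, w i * ξ i ω) = ∑ i ∈ s, fun ω => w i * ξ i ω := by
    ext ω; simp
  have hL2 : ∀ i ∈ s, MemLp (fun ω => w i * ξ i ω) 2 μ := fun i hi => (hξ i hi).const_mul _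
  rw [variance_const_add, hsum, IndepFun.variance_sum hL2]
  · exact sum_congr rfl fun i _ => variance_const_mul _ _ _
  · exact fun i hi j hj hij =>
      (hindep hi hj hij).comp (measurable_const_mul _) (measurable_const_mul _)
  · exact (memLp_finsetSum s hL2).aestronglyMeasurable

end AffineCombination

/-- The coefficient of `ξ i` in `X N` when `X (k + 1) = β * X k + c * (ξ k + ξ (k + 1))`. -/
def noiseWeight (β c : ℝ) : ℕ → ℕ → ℝ
  | 0, _ => 0
  | N + 1, i => β * noiseWeight β c N i + (if i = N then c else 0) + (if i = N + 1 then c else 0)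

namespace noiseWeight

variable (β c : ℝ)

theorem eq_zero_of_lt {N i : ℕ} (h : N < i) : noiseWeight β c N i = 0 := by
  induction N with
  | zero => rfl
  | succ N ih => simp [noiseWeight, ih (by omega), show i ≠ N by omega, show i ≠ N + 1 by omega]

theorem succ_self (N : ℕ) : noiseWeight β c (N + 1) (N + 1) = c := by
  simp [noiseWeight, eq_zero_of_lt β c (Nat.lt_succ_self N)]

theorem sum_sq_succ (N : ℕ) :
    ∑ i ∈ range (N + 2), noiseWeight β c (N + 1) i ^ 2
      = β ^ 2 * ∑ i ∈ range (N + 1), noiseWeight β c N i ^ 2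
        + 2 * c ^ 2 + 2 * β * c * noiseWeight β c N N := by
  have hlt : ∀ i ∈ range N,
      noiseWeight β c (N + 1) i ^ 2 = β ^ 2 * noiseWeight β c N i ^ 2 := fun i hi => by
    have := mem_range.1 hi
    simp [noiseWeight, show i ≠ N by omega, show i ≠ N + 1 by omega, mul_pow]
  rw [sum_range_succ, sum_range_succ, sum_range_succ _ N, mul_add, sum_congr rfl hlt, ← mul_sum,
    succ_self]
  simp only [noiseWeight, if_pos, if_neg (show N ≠ N + 1 by omega)]
  ring

theorem sum_sq_succ_eq_geom_sum (M : ℕ) :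
    ∑ i ∈ range (M + 2), noiseWeight β c (M + 1) i ^ 2
      = 2 * c ^ 2 * ∑ j ∈ range (2 * M + 1), β ^ j := by
  induction M with
  | zero => simp [noiseWeight, sum_range_succ]; ring
  | succ M ih =>
    rw [sum_sq_succ, ih, succ_self, show 2 * (M + 1) + 1 = 2 * M + 1 + 1 + 1 by ring,
      geom_sum_succ (n := 2 * M + 1 + 1), geom_sum_succ (n := 2 * M + 1)]
    ring

end noiseWeight

theorem eq_pow_mul_add_sum_noiseWeight {Ω : Type*} {X ξ : ℕ → Ω → ℝ} {x₀ β c : ℝ}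
    (hX0 : ∀ ω, X 0 ω = x₀)
    (hXrec : ∀ k ω, X (k + 1) ω = β * X k ω + c * (ξ k ω + ξ (k + 1) ω)) (N : ℕ) :
    X N = fun ω => β ^ N * x₀ + ∑ i ∈ range (N + 1), noiseWeight β c N i * ξ i ω := by
  induction N with
  | zero => ext ω; simp [hX0, noiseWeight]
  | succ N ih =>
    ext ω
    have hlt : ∀ i ∈ range N,
        noiseWeight β c (N + 1) i * ξ i ω = β * (noiseWeight β c N i * ξ i ω) := fun i hi => by
      have := mem_range.1 hi
      simp [noiseWeight, show i ≠ N by omega, show i ≠ N + 1 by omega, mul_assoc]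
    rw [hXrec, ih]
    dsimp only
    rw [sum_range_succ _ (N + 1), sum_range_succ _ N, sum_range_succ _ N, sum_congr rfl hlt,
      ← mul_sum, noiseWeight.succ_self]
    simp only [noiseWeight, if_pos, if_neg (show N ≠ N + 1 by omega)]
    ring

theorem nonMarkovian_OU_variance_general
    {Ω : Type*} [MeasureSpace Ω] [IsProbabilityMeasure (ℙ : Measure Ω)]
    (α σ h x₀ : ℝ) (hα : 0 < α) (hh : 0 < h)
    (ξ : ℕ → Ω → ℝ)
    (hmeas : ∀ k, Measurable (ξ k))
    (hindep : iIndepFun ξ ℙ)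
    (hgauss : ∀ k, Measure.map (ξ k) ℙ = gaussianReal 0 1)
    (X : ℕ → Ω → ℝ)
    (hX0 : ∀ ω, X 0 ω = x₀)
    (hXrec : ∀ k ω, X (k + 1) ω
      = (1 - α * h) * X k ω + σ * Real.sqrt h / 2 * (ξ k ω + ξ (k + 1) ω)) :
    ∀ N : ℕ, 1 ≤ N → variance (X N) ℙ
      = σ ^ 2 / (2 * α) * (1 - (1 - α * h) ^ (2 * N) / (1 - α * h)) := by
  intro N hN
  obtain ⟨M, rfl⟩ := Nat.exists_eq_add_of_le' hN
  set β := 1 - α * h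
  have hvar : ∀ k, Var[ξ k; ℙ] = 1 := fun k => by
    simp [HasLaw.variance_eq ⟨(hmeas k).aemeasurable, hgauss k⟩]
  have hL2 : ∀ k, MemLp (ξ k) 2 ℙ := fun k =>
    ((hgauss k).symm ▸ memLp_id_gaussianReal 2 : MemLp id 2 _).comp_of_map (hmeas k).aemeasurable
  rw [eq_pow_mul_add_sum_noiseWeight hX0 hXrec,
    variance_const_add_sum_mul (fun k _ => hL2 k) (fun i _ j _ hij => hindep.indepFun hij)]
  simp only [hvar, mul_one]
  rw [noiseWeight.sum_sq_succ_eq_geom_sum]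
  have hpow : β ^ (2 * (M + 1)) / β = β ^ (2 * M + 1) := by
    rcases eq_or_ne β 0 with h0 | h0
    · simp [h0]
    · rw [show 2 * (M + 1) = 2 * M + 1 + 1 by ring, pow_succ, mul_div_cancel_right₀ _ h0]
  have hgeom := mul_neg_geom_sum β (2 * M + 1)
  rw [hpow, ← hgeom, div_pow, mul_pow, sq_sqrt hh.le, show 1 - β = α * h by ring]
  field_simp

theorem nonMarkovian_OU_variance
    {Ω : Type*} [MeasureSpace Ω] [IsProbabilityMeasure (ℙ : Measure Ω)]
    (α σ h x₀ : ℝ) (hα : 0 < α) (hσ : 0 < σ) (hh : 0 < h) (hαh : α * h < 1)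
    (ξ : ℕ → Ω → ℝ)
    (hmeas : ∀ k, Measurable (ξ k))
    (hindep : iIndepFun ξ ℙ)
    (hgauss : ∀ k, Measure.map (ξ k) ℙ = gaussianReal 0 1)
    (X : ℕ → Ω → ℝ)
    (hX0 : ∀ ω, X 0 ω = x₀)
    (hXrec : ∀ k ω, X (k + 1) ω
      = (1 - α * h) * X k ω + σ * Real.sqrt h / 2 * (ξ k ω + ξ (k + 1) ω)) :
    ∀ N : ℕ, 1 ≤ N → variance (X N) ℙ
      = σ ^ 2 / (2 * α) * (1 - (1 - α * h) ^ (2 * N) / (1 - α * h)) :=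
  nonMarkovian_OU_variance_general α σ h x₀ hα hh ξ hmeas hindep hgauss X hX0 hXrec
end

section
/- Let V : ℝ^d → ℝ be C³ with a = -∇V, and suppose exp(-(2/σ²)V) is integrable and all integrands below are integrable and decay appropriately at infinity. Then for any C³ function u : ℝ^d → ℝ of polynomial growth with polynomially growing derivatives, the quantity B(x) = (1/2)[∑_{i,j} a^j ∂_j a^i ∂_i u + (σ²/2) ∑_{i,j} ∂_j a^i ∂_i∂_j u + (σ²/2) ∑_{i,j} ∂²_{jj} a^i ∂_i u] satisfies ∫_{ℝ^d} B(x) exp(-(2/σ²) V(x)) dx = 0. -/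
open MeasureTheory Real Filter

/-!
Write `ρ = exp (-(2 / σ²) V)`, so that `∂ⱼ ρ = (2 / σ²) aʲ ρ`. For each pair `(i, j)` the product
rule gives
`∂ⱼ (∂ⱼ aⁱ ∂ᵢ u ρ) = (∂ⱼⱼ aⁱ ∂ᵢ u + ∂ⱼ aⁱ ∂ᵢⱼ u + (2 / σ²) aʲ ∂ⱼ aⁱ ∂ᵢ u) ρ`,
and `B ρ` is `σ² / 4` times the sum of these derivatives over all `i, j`. Each of them integrates
to zero because the flux `∂ⱼ aⁱ ∂ᵢ u ρ` vanishes at infinity: on every line in direction `eⱼ`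
this is the fundamental theorem of calculus, and Fubini integrates over the lines.
-/

noncomputable def pd {d : ℕ} (f : EuclideanSpace ℝ (Fin d) → ℝ) (i : Fin d)
    (x : EuclideanSpace ℝ (Fin d)) : ℝ :=
  fderiv ℝ f x (EuclideanSpace.single i 1)

/-- The leading error coefficient function `B` of the non-Markovian scheme. -/
noncomputable def Bcoef {d : ℕ} (σ : ℝ) (a : EuclideanSpace ℝ (Fin d) → EuclideanSpace ℝ (Fin d))
    (u : EuclideanSpace ℝ (Fin d) → ℝ) (x : EuclideanSpace ℝ (Fin d)) : ℝ :=
  (1 / 2) *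
    ( (∑ i, ∑ j, a x j * pd (fun y => a y i) j x * pd u i x)
      + (σ ^ 2 / 2) * ∑ i, ∑ j, pd (fun y => a y i) j x * pd (fun y => pd u i y) j x
      + (σ ^ 2 / 2) * ∑ i, ∑ j, pd (fun y => pd (fun z => a z i) j y) j x * pd u i x )

theorem integral_sum_sum_eq_zero {α ι κ E : Type*} [MeasurableSpace α] [NormedAddCommGroup E]
    [NormedSpace ℝ E] {μ : Measure α} {s : Finset ι} {t : Finset κ} {F : ι → κ → α → E}
    (hF : ∀ i j, Integrable (F i j) μ) (hF₀ : ∀ i j, ∫ x, F i j x ∂μ = 0) :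
    ∫ x, ∑ i ∈ s, ∑ j ∈ t, F i j x ∂μ = 0 := by
  rw [integral_finsetSum _ fun i _ => integrable_finsetSum _ fun j _ => hF i j]
  refine Finset.sum_eq_zero fun i _ => ?_
  rw [integral_finsetSum _ fun j _ => hF i j]
  exact Finset.sum_eq_zero fun j _ => hF₀ i j

section Divergence

open Measure

variable {E : Type*} [NormedAddCommGroup E] [NormedSpace ℝ E]

theorem exists_continuousLinearEquiv_prod_apply_eq [FiniteDimensional ℝ E] {v : E} (hv : v ≠ 0) :
    ∃ L : E ≃L[ℝ] ((Fin (Module.finrank ℝ E - 1) → ℝ) × ℝ), L v = (0, 1) := by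
  have : Nontrivial E := nontrivial_iff.2 ⟨v, 0, hv⟩
  have hdim : Module.finrank ℝ ((Fin (Module.finrank ℝ E - 1) → ℝ) × ℝ) = Module.finrank ℝ E := by
    simpa using Nat.sub_add_cancel Module.finrank_pos
  let L₀ : E ≃L[ℝ] _ := (ContinuousLinearEquiv.ofFinrankEq hdim).symm
  obtain ⟨M, hM⟩ := SeparatingDual.exists_continuousLinearEquiv_apply_eq (R := ℝ)
    (L₀.map_ne_zero_iff.2 hv) (show ((0, 1) : (Fin (Module.finrank ℝ E - 1) → ℝ) × ℝ) ≠ 0 by simp)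
  exact ⟨L₀.trans M, hM⟩

variable [MeasurableSpace E]

theorem integral_prod_eq_zero_of_hasLineDerivAt_snd {μ : Measure E} [SigmaFinite μ]
    {F F' : E × ℝ → ℝ} (hF : ∀ x, HasLineDerivAt ℝ F (F' x) x (0, 1))
    (hF' : Integrable F' (μ.prod volume)) (hdec : Tendsto F (cocompact (E × ℝ)) (nhds 0)) :
    ∫ x, F' x ∂(μ.prod volume) = 0 := by
  rw [integral_prod _ hF']
  refine integral_eq_zero_of_ae ?_
  filter_upwards [hF'.prod_right_ae] with x hx
  have hslice : Tendsto (fun t : ℝ => F (x, t)) (cocompact ℝ) (nhds 0) := by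
    refine hdec.comp ?_
    rw [← coprod_cocompact]
    exact (tendsto_comap_iff.2 (by exact tendsto_id)).mono_right le_sup_right
  have hderiv : ∀ t, HasDerivAt (fun t => F (x, t)) (F' (x, t)) t := fun t => by
    have h : HasDerivAt (fun s => F ((x, t) + s • (0, 1))) (F' (x, t)) (t + -t) := by
      rw [add_neg_cancel]; exact hF (x, t)
    simpa using h.comp_add_const t (-t)
  simpa using integral_of_hasDerivAt_of_tendsto hderiv hx (hslice.mono_left atBot_le_cocompact)
    (hslice.mono_left atTop_le_cocompact)

variable [BorelSpace E] [FiniteDimensional ℝ E]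

theorem integral_eq_zero_of_hasLineDerivAt_of_tendsto_cocompact {μ : Measure E}
    [IsAddHaarMeasure μ] {F F' : E → ℝ} {v : E} (hF : ∀ x, HasLineDerivAt ℝ F (F' x) x v)
    (hF' : Integrable F' μ) (hdec : Tendsto F (cocompact E) (nhds 0)) :
    ∫ x, F' x ∂μ = 0 := by
  rcases eq_or_ne v 0 with rfl | hv
  · have : F' = 0 := funext fun x => by
      simpa [hasLineDerivAt_zero.lineDeriv] using (hF x).lineDeriv.symm
    simp [this]
  obtain ⟨L, hL⟩ := exists_continuousLinearEquiv_prod_apply_eq hv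
  let ν : Measure E := Measure.map L.symm (addHaar.prod volume)
  have : IsAddHaarMeasure ν := L.symm.isAddHaarMeasure_map _
  have hL_emb : MeasurableEmbedding L.symm := L.symm.toHomeomorph.measurableEmbedding
  -- Haar measures are proportional, so it is enough to integrate against `ν`.
  suffices ∫ x, F' x ∂ν = 0 by
    rw [isAddLeftInvariant_eq_smul μ ν, integral_smul_nnreal_measure, this, smul_zero]
  rw [hL_emb.integral_map]
  refine integral_prod_eq_zero_of_hasLineDerivAt_snd (fun y => ?_) ?_
    (hdec.comp L.symm.toHomeomorph.isClosedEmbedding.tendsto_cocompact)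
  · have hcomp : (F ∘ L.symm) ∘ (L : E →ₗ[ℝ] _) = F := by ext; simp
    have h := HasLineDerivAt.of_comp (f := F ∘ L.symm) (L := (L : E →ₗ[ℝ] _)) (x := L.symm y)
      (by rw [hcomp]; exact hF _)
    simpa [hL] using h
  · refine hL_emb.integrable_map_iff.1 ?_
    change Integrable F' ν
    rw [isAddLeftInvariant_eq_smul ν μ]
    exact hF'.smul_measure_nnreal

end Divergence

section Euclidean

variable {d : ℕ}

theorem gradient_apply_eq_pd (V : EuclideanSpace ℝ (Fin d) → ℝ) (x : EuclideanSpace ℝ (Fin d))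
    (k : Fin d) : gradient V x k = pd V k x := by
  rw [pd, ← toDual_gradient, InnerProductSpace.toDual_apply_apply,
    EuclideanSpace.inner_single_right]
  simp

theorem ContDiff.pd {m n : WithTop ℕ∞} {f : EuclideanSpace ℝ (Fin d) → ℝ}
    (hf : ContDiff ℝ n f) (hmn : m + 1 ≤ n) (i : Fin d) : ContDiff ℝ m (_root_.pd f i) :=
  (hf.fderiv_right hmn).clm_apply contDiff_const

theorem hasLineDerivAt_mul_mul_exp_neg_mul {V f g : EuclideanSpace ℝ (Fin d) → ℝ}
    {a : EuclideanSpace ℝ (Fin d) → EuclideanSpace ℝ (Fin d)} {x : EuclideanSpace ℝ (Fin d)}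
    (c : ℝ) (j : Fin d) (ha : a x = -gradient V x) (hV : DifferentiableAt ℝ V x)
    (hf : DifferentiableAt ℝ f x) (hg : DifferentiableAt ℝ g x) :
    HasLineDerivAt ℝ (fun y => f y * g y * exp (-c * V y))
      (pd f j x * g x * exp (-c * V x) + f x * pd g j x * exp (-c * V x)
        + c * (a x j * f x * g x * exp (-c * V x))) x (EuclideanSpace.single j 1) := by
  have hF : HasFDerivAt (fun y => f y * g y * exp (-c * V y)) _ x :=
    (hf.hasFDerivAt.mul hg.hasFDerivAt).mul (hV.hasFDerivAt.const_mul (-c)).exp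
  have haj : a x j = -pd V j x := by rw [ha, PiLp.neg_apply, gradient_apply_eq_pd]
  convert! hF.hasLineDerivAt (EuclideanSpace.single j 1) using 1
  simp only [add_apply, smul_apply, smul_eq_mul, pd, haj, Pi.mul_apply]
  ring

theorem Bcoef_mul_eq_sum {σ : ℝ} (hσ : σ ≠ 0)
    (a : EuclideanSpace ℝ (Fin d) → EuclideanSpace ℝ (Fin d))
    (u : EuclideanSpace ℝ (Fin d) → ℝ) (x : EuclideanSpace ℝ (Fin d)) (w : ℝ) :
    Bcoef σ a u x * w = σ ^ 2 / 4 * ∑ i, ∑ j,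
      (pd (fun y => pd (fun z => a z i) j y) j x * pd u i x * w
        + pd (fun y => a y i) j x * pd (fun y => pd u i y) j x * w
        + 2 / σ ^ 2 * (a x j * pd (fun y => a y i) j x * pd u i x * w)) := by
  simp only [Bcoef, Finset.mul_sum, Finset.sum_mul, ← Finset.sum_add_distrib]
  refine Finset.sum_congr rfl fun i _ => Finset.sum_congr rfl fun j _ => ?_
  field_simp
  ring

end Euclidean

theorem gibbs_average_of_B_vanishes_general
    {d : ℕ} (σ : ℝ) (hσ : 0 < σ)
    (V : EuclideanSpace ℝ (Fin d) → ℝ) (hV : ContDiff ℝ 3 V)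
    (a : EuclideanSpace ℝ (Fin d) → EuclideanSpace ℝ (Fin d))
    (ha : ∀ x, a x = -gradient V x)
    (u : EuclideanSpace ℝ (Fin d) → ℝ) (hu : ContDiff ℝ 3 u)
    (hint : ∀ i j : Fin d,
      Integrable (fun x => a x j * pd (fun y => a y i) j x * pd u i x *
          Real.exp (-(2 / σ ^ 2) * V x)) ∧
      Integrable (fun x => pd (fun y => a y i) j x * pd (fun y => pd u i y) j x *
          Real.exp (-(2 / σ ^ 2) * V x)) ∧
      Integrable (fun x => pd (fun y => pd (fun z => a z i) j y) j x * pd u i x *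
          Real.exp (-(2 / σ ^ 2) * V x)))
    (hdecay : ∀ i j : Fin d,
      Tendsto (fun x => pd (fun y => a y i) j x * pd u i x *
          Real.exp (-(2 / σ ^ 2) * V x)) (Filter.cocompact _) (nhds 0) ∧
      Tendsto (fun x => a x j * pd u i x *
          Real.exp (-(2 / σ ^ 2) * V x)) (Filter.cocompact _) (nhds 0)) :
    ∫ x, Bcoef σ a u x * Real.exp (-(2 / σ ^ 2) * V x) = 0 := by
  have ha_smooth : ∀ i, ContDiff ℝ 2 (fun y => a y i) := fun i => by
    simp_rw [ha, PiLp.neg_apply, gradient_apply_eq_pd]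
    exact (hV.pd (by norm_num) i).neg
  have hG : ∀ i j, Integrable (fun x =>
      pd (fun y => pd (fun z => a z i) j y) j x * pd u i x * Real.exp (-(2 / σ ^ 2) * V x)
        + pd (fun y => a y i) j x * pd (fun y => pd u i y) j x * Real.exp (-(2 / σ ^ 2) * V x)
        + 2 / σ ^ 2 * (a x j * pd (fun y => a y i) j x * pd u i x *
            Real.exp (-(2 / σ ^ 2) * V x))) := fun i j => by
    obtain ⟨h₁, h₂, h₃⟩ := hint i j
    exact (h₃.add h₂).add (h₁.const_mul _)
  simp_rw [Bcoef_mul_eq_sum hσ.ne']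
  rw [integral_const_mul, integral_sum_sum_eq_zero hG fun i j =>
    integral_eq_zero_of_hasLineDerivAt_of_tendsto_cocompact (fun x =>
      hasLineDerivAt_mul_mul_exp_neg_mul _ j (ha x) (hV.differentiable (by norm_num) x)
        (((ha_smooth i).pd (m := 1) (by norm_num) j).differentiable (by norm_num) x)
        ((hu.pd (m := 2) (by norm_num) i).differentiable (by norm_num) x)) (hG i j) (hdecay i j).1,
    mul_zero]

theorem gibbs_average_of_B_vanishes
    {d : ℕ} (σ : ℝ) (hσ : 0 < σ)
    (V : EuclideanSpace ℝ (Fin d) → ℝ) (hV : ContDiff ℝ 3 V)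
    (a : EuclideanSpace ℝ (Fin d) → EuclideanSpace ℝ (Fin d))
    (ha : ∀ x, a x = -gradient V x)
    (hweight : Integrable (fun x => Real.exp (-(2 / σ ^ 2) * V x)))
    (u : EuclideanSpace ℝ (Fin d) → ℝ) (hu : ContDiff ℝ 3 u)
    (hugrowth : ∃ C : ℝ, ∃ n : ℕ, ∀ x,
      |u x| + (∑ i, |pd u i x|) + ∑ i, ∑ j, |pd (fun y => pd u i y) j x|
        ≤ C * (1 + ‖x‖) ^ n)
    (hBint : Integrable (fun x => Bcoef σ a u x * Real.exp (-(2 / σ ^ 2) * V x)))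
    (hint : ∀ i j : Fin d,
      Integrable (fun x => a x j * pd (fun y => a y i) j x * pd u i x *
          Real.exp (-(2 / σ ^ 2) * V x)) ∧
      Integrable (fun x => pd (fun y => a y i) j x * pd (fun y => pd u i y) j x *
          Real.exp (-(2 / σ ^ 2) * V x)) ∧
      Integrable (fun x => pd (fun y => pd (fun z => a z i) j y) j x * pd u i x *
          Real.exp (-(2 / σ ^ 2) * V x)))
    (hdecay : ∀ i j : Fin d,
      Tendsto (fun x => pd (fun y => a y i) j x * pd u i x *
          Real.exp (-(2 / σ ^ 2) * V x)) (Filter.cocompact _) (nhds 0) ∧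
      Tendsto (fun x => a x j * pd u i x *
          Real.exp (-(2 / σ ^ 2) * V x)) (Filter.cocompact _) (nhds 0)) :
    ∫ x, Bcoef σ a u x * Real.exp (-(2 / σ ^ 2) * V x) = 0 :=
  gibbs_average_of_B_vanishes_general σ hσ V hV a ha u hu hint hdecay
end

section
/- Let B : [0,∞) × ℝ^d → ℝ satisfy |B(t,x)| ≤ K(1+|x|^κ) e^{-λ_u(τ-t)} for 0 ≤ t ≤ τ, suppose ∫ B(t,y) ρ(y) dy = 0 for all t (where ρ is a probability density), and suppose the transition expectations satisfy the geometric ergodicity bound |E[B̃(s, X_x(t))] - ∫ B̃(s,y)ρ(y) dy| ≤ K(1+|x|^κ) e^{-λ_B t} for all 0 ≤ s ≤ τ and t > 0, where B̃(t,x) = B(t,x)e^{λ_u(τ-t)}. Then |∫_0^τ E[B(t, X_x(t))] dt| ≤ K'(1+|x|^κ) e^{-λ τ} for some constants K' > 0 and λ > 0 independent of τ and x. -/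
open MeasureTheory Real Filter

/-! At time `t` the ergodicity bound with `s = t` controls `E[B(t, X_x(t))] e^{λ_u (τ - t)}`,
since `B(t, ·)` has mean zero under `ρ`. Hence the integrand is at most
`K (1 + |x|^κ) e^{-λ_B t - λ_u (τ - t)} ≤ K (1 + |x|^κ) e^{-min(λ_u, λ_B) τ}`, and the length `τ`
of the time interval is absorbed by halving the rate. -/

lemma integral_mul_const_mul_eq_zero {α : Type*} [MeasurableSpace α] {μ : Measure α}
    {g ρ : α → ℝ} (h : ∫ y, g y * ρ y ∂μ = 0) (c : ℝ) :
    ∫ y, g y * c * ρ y ∂μ = 0 := by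
  simp_rw [mul_right_comm _ c]
  rw [integral_mul_const, h, zero_mul]

lemma abs_integral_le_of_abs_integral_mul_exp_le {Ω : Type*} [MeasurableSpace Ω]
    {μ : Measure Ω} {f : Ω → ℝ} {a C : ℝ} (h : |∫ ω, f ω * exp a ∂μ| ≤ C) :
    |∫ ω, f ω ∂μ| ≤ C * exp (-a) := by
  rw [integral_mul_const, abs_mul, abs_of_pos (exp_pos a)] at h
  rw [exp_neg, ← div_eq_mul_inv]
  exact (le_div_iff₀ (exp_pos a)).mpr h

lemma exp_neg_mul_mul_exp_neg_mul_sub_le {a b t τ : ℝ} (ht : 0 ≤ t) (htτ : t ≤ τ) :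
    exp (-b * t) * exp (-(a * (τ - t))) ≤ exp (-min a b * τ) := by
  rw [← exp_add, exp_le_exp]
  have hb : min a b * t ≤ b * t := mul_le_mul_of_nonneg_right (min_le_right a b) ht
  have ha : min a b * (τ - t) ≤ a * (τ - t) :=
    mul_le_mul_of_nonneg_right (min_le_left a b) (sub_nonneg.mpr htτ)
  linarith

lemma mul_exp_neg_mul_le {l : ℝ} (hl : 0 < l) (τ : ℝ) :
    τ * exp (-l * τ) ≤ 2 / l * exp (-(l / 2) * τ) := by
  have hτ : τ ≤ 2 / l * exp (l / 2 * τ) := by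
    rw [div_mul_eq_mul_div, le_div_iff₀ hl]
    linarith [add_one_le_exp (l / 2 * τ)]
  calc τ * exp (-l * τ) = τ * exp (-(l / 2 * τ)) * exp (-(l / 2) * τ) := by
        rw [mul_assoc, ← exp_add]; ring_nf
    _ ≤ 2 / l * exp (l / 2 * τ) * exp (-(l / 2 * τ)) * exp (-(l / 2) * τ) := by gcongr
    _ = 2 / l * exp (-(l / 2) * τ) := by rw [mul_assoc (2 / l), ← exp_add]; simp

theorem leading_error_coefficient_decays_exponentially_general
    {Ω : Type*} [MeasureSpace Ω]
    (d κ : ℕ) (K lu lB : ℝ) (hK : 0 < K) (hlu : 0 < lu) (hlB : 0 < lB)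
    (ρ : EuclideanSpace ℝ (Fin d) → ℝ) :
    ∃ K' > (0 : ℝ), ∃ lam > (0 : ℝ), ∀ τ : ℝ, 0 < τ →
      ∀ (B : ℝ → EuclideanSpace ℝ (Fin d) → ℝ)
        (X : ℝ → Ω → EuclideanSpace ℝ (Fin d))
        (x : EuclideanSpace ℝ (Fin d)),
        Measurable (Function.uncurry B) →
        (∀ t, Measurable (X t)) →
        (∀ ω, X 0 ω = x) →
        (∀ t y, 0 ≤ t → t ≤ τ →
          |B t y| ≤ K * (1 + ‖y‖ ^ κ) * Real.exp (-lu * (τ - t))) →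
        (∀ t, ∫ y, B t y * ρ y = 0) →
        (∀ s t : ℝ, 0 ≤ s → s ≤ τ → 0 < t →
          |(∫ ω : Ω, B s (X t ω) * Real.exp (lu * (τ - s)) ∂(volume : MeasureTheory.Measure Ω))
              - ∫ y, B s y * Real.exp (lu * (τ - s)) * ρ y|
            ≤ K * (1 + ‖x‖ ^ κ) * Real.exp (-lB * t)) →
        |∫ t in (0 : ℝ)..τ, ∫ ω : Ω, B t (X t ω) ∂(volume : MeasureTheory.Measure Ω)|
          ≤ K' * (1 + ‖x‖ ^ κ) * Real.exp (-lam * τ) := by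
  have hl : 0 < min lu lB := lt_min hlu hlB
  refine ⟨2 * K / min lu lB, by positivity, min lu lB / 2, by positivity, ?_⟩
  intro τ hτ B X x _ _ _ _ hmean herg
  have hpoint : ∀ t ∈ Set.uIoc 0 τ, ‖∫ ω, B t (X t ω)‖
      ≤ K * (1 + ‖x‖ ^ κ) * exp (-min lu lB * τ) := by
    rw [Set.uIoc_of_le hτ.le]
    rintro t ⟨ht0, htτ⟩
    have h := herg t t ht0.le htτ ht0
    rw [integral_mul_const_mul_eq_zero (hmean t), sub_zero] at h
    calc ‖∫ ω, B t (X t ω)‖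
        ≤ K * (1 + ‖x‖ ^ κ) * exp (-lB * t) * exp (-(lu * (τ - t))) :=
          abs_integral_le_of_abs_integral_mul_exp_le h
      _ ≤ K * (1 + ‖x‖ ^ κ) * exp (-min lu lB * τ) := by
          rw [mul_assoc]
          gcongr
          exact exp_neg_mul_mul_exp_neg_mul_sub_le ht0.le htτ
  calc |∫ t in (0 : ℝ)..τ, ∫ ω, B t (X t ω)|
      ≤ K * (1 + ‖x‖ ^ κ) * exp (-min lu lB * τ) * |τ - 0| :=
        intervalIntegral.norm_integral_le_of_norm_le_const hpoint
    _ = K * (1 + ‖x‖ ^ κ) * (τ * exp (-min lu lB * τ)) := by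
        rw [sub_zero, abs_of_pos hτ]; ring
    _ ≤ K * (1 + ‖x‖ ^ κ) * (2 / min lu lB * exp (-(min lu lB / 2) * τ)) :=
        mul_le_mul_of_nonneg_left (mul_exp_neg_mul_le hl τ) (by positivity)
    _ = 2 * K / min lu lB * (1 + ‖x‖ ^ κ) * exp (-(min lu lB / 2) * τ) := by ring

theorem leading_error_coefficient_decays_exponentially
    {Ω : Type*} [MeasureSpace Ω] [IsProbabilityMeasure (volume : Measure Ω)]
    (d κ : ℕ) (K lu lB : ℝ) (hK : 0 < K) (hlu : 0 < lu) (hlB : 0 < lB)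
    (ρ : EuclideanSpace ℝ (Fin d) → ℝ)
    (hρnonneg : ∀ y, 0 ≤ ρ y) (hρint : Integrable ρ) (hρ1 : ∫ y, ρ y = 1) :
    ∃ K' > (0 : ℝ), ∃ lam > (0 : ℝ), ∀ τ : ℝ, 0 < τ →
      ∀ (B : ℝ → EuclideanSpace ℝ (Fin d) → ℝ)
        (X : ℝ → Ω → EuclideanSpace ℝ (Fin d))
        (x : EuclideanSpace ℝ (Fin d)),
        Measurable (Function.uncurry B) →
        (∀ t, Measurable (X t)) →
        (∀ ω, X 0 ω = x) →
        (∀ t y, 0 ≤ t → t ≤ τ →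
          |B t y| ≤ K * (1 + ‖y‖ ^ κ) * Real.exp (-lu * (τ - t))) →
        (∀ t, ∫ y, B t y * ρ y = 0) →
        (∀ s t : ℝ, 0 ≤ s → s ≤ τ → 0 < t →
          |(∫ ω : Ω, B s (X t ω) * Real.exp (lu * (τ - s)) ∂(volume : MeasureTheory.Measure Ω))
              - ∫ y, B s y * Real.exp (lu * (τ - s)) * ρ y|
            ≤ K * (1 + ‖x‖ ^ κ) * Real.exp (-lB * t)) →
        |∫ t in (0 : ℝ)..τ, ∫ ω : Ω, B t (X t ω) ∂(volume : MeasureTheory.Measure Ω)|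
          ≤ K' * (1 + ‖x‖ ^ κ) * Real.exp (-lam * τ) :=
  leading_error_coefficient_decays_exponentially_general d κ K lu lB hK hlu hlB ρ
end

section
/- Let X(t) be an exponentially ergodic process satisfying |E φ(X_x(t)) - φ^{erg}| ≤ C(x) e^{-λ t} for all t ≥ 0, and suppose a numerical approximation satisfies the finite-time error expansion E φ(X_x(τ)) - E φ(X_N) = C_0(τ,x) h + C(τ,x) h² with |C_0(τ,x)| ≤ K(1+|x|^κ)e^{-λ'τ} and |C(τ,x)| ≤ K(1+|x|^κ e^{-λ'τ}). Then lim sup_{τ→∞} |E φ(X_x(τ)) - E φ(X_N)| ≤ K h² where N = τ/h, i.e. the scheme approximates the ergodic average φ^{erg} to second order in h. -/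
/-!
The first-order coefficient `C₀(τ)` decays like `e^{-λ'τ}`, and so does the `|x|^κ` part of the
second-order coefficient `C(τ)`. Hence the error `|C₀ h + C h²|` at time `τ = N h` is dominated
by a majorant tending to `K h²` as `N → ∞`, which bounds its `limsup`.
-/

open Real Filter Topology

lemma tendsto_exp_neg_mul_natCast_mul_atTop {a h : ℝ} (ha : 0 < a) (hh : 0 < h) :
    Tendsto (fun N : ℕ => exp (-a * (N * h))) atTop (𝓝 0) := by
  have hlin : Tendsto (fun N : ℕ => a * h * N) atTop atTop :=
    tendsto_natCast_atTop_atTop.const_mul_atTop (mul_pos ha hh)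
  refine tendsto_exp_atBot.comp ((tendsto_neg_atTop_atBot.comp hlin).congr fun N => ?_)
  simp only [Function.comp_apply]
  ring

lemma limsup_le_of_eventuallyLE_of_tendsto {α : Type*} {l : Filter α} [l.NeBot]
    {f g : α → ℝ} {L : ℝ} (hf : l.IsCoboundedUnder (· ≤ ·) f) (hfg : f ≤ᶠ[l] g)
    (hg : Tendsto g l (𝓝 L)) : limsup f l ≤ L :=
  hg.limsup_eq ▸ limsup_le_limsup hfg hf hg.isBoundedUnder_le

lemma abs_mul_add_mul_sq_le {c₀ c h B₀ B : ℝ} (hh : 0 ≤ h) (hc₀ : |c₀| ≤ B₀) (hc : |c| ≤ B) :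
    |c₀ * h + c * h ^ 2| ≤ B₀ * h + B * h ^ 2 :=
  calc |c₀ * h + c * h ^ 2|
      ≤ |c₀| * h + |c| * h ^ 2 :=
        (abs_add_le _ _).trans_eq <| by
          rw [abs_mul, abs_mul, abs_of_nonneg hh, abs_of_nonneg (pow_nonneg hh 2)]
    _ ≤ B₀ * h + B * h ^ 2 := by gcongr

lemma tendsto_expansion_majorant {α : Type*} {l : Filter α} {e : α → ℝ} (he : Tendsto e l (𝓝 0))
    (K A h : ℝ) :
    Tendsto (fun t => K * (1 + A) * e t * h + K * (1 + A * e t) * h ^ 2) l (𝓝 (K * h ^ 2)) := by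
  have hcont : Continuous fun y : ℝ => K * (1 + A) * y * h + K * (1 + A * y) * h ^ 2 := by
    fun_prop
  have hval : K * (1 + A) * 0 * h + K * (1 + A * 0) * h ^ 2 = K * h ^ 2 := by ring
  exact hval ▸ (hcont.tendsto 0).comp he

theorem second_order_ergodic_limit_from_expansion_general
    (d κ : ℕ) (h K l' : ℝ)
    (hh : 0 < h) (hl' : 0 < l')
    (x : EuclideanSpace ℝ (Fin d))
    (u : ℝ → ℝ) (v : ℕ → ℝ) (C₀ C : ℝ → ℝ)
    (hexp : ∀ N : ℕ, u (N * h) - v N = C₀ (N * h) * h + C (N * h) * h ^ 2)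
    (hC₀ : ∀ τ : ℝ, 0 ≤ τ → |C₀ τ| ≤ K * (1 + ‖x‖ ^ κ) * Real.exp (-l' * τ))
    (hC : ∀ τ : ℝ, 0 ≤ τ → |C τ| ≤ K * (1 + ‖x‖ ^ κ * Real.exp (-l' * τ))) :
    Filter.limsup (fun N : ℕ => |u (N * h) - v N|) Filter.atTop ≤ K * h ^ 2 := by
  refine limsup_le_of_eventuallyLE_of_tendsto
    (isBoundedUnder_of ⟨0, fun N => abs_nonneg _⟩).isCoboundedUnder_le
    (Eventually.of_forall fun N => ?_)
    (tendsto_expansion_majorant (tendsto_exp_neg_mul_natCast_mul_atTop hl' hh) K (‖x‖ ^ κ) h)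
  have hτ : (0 : ℝ) ≤ N * h := by positivity
  show |u (N * h) - v N| ≤ _
  rw [hexp N]
  exact abs_mul_add_mul_sq_le hh.le (hC₀ _ hτ) (hC _ hτ)

theorem second_order_ergodic_limit_from_expansion
    (d κ : ℕ) (h K Cx l l' φerg : ℝ)
    (hh : 0 < h) (hK : 0 < K) (hl : 0 < l) (hl' : 0 < l')
    (x : EuclideanSpace ℝ (Fin d))
    (u : ℝ → ℝ) (v : ℕ → ℝ) (C₀ C : ℝ → ℝ)
    (herg : ∀ t : ℝ, 0 ≤ t → |u t - φerg| ≤ Cx * Real.exp (-l * t))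
    (hexp : ∀ N : ℕ, u (N * h) - v N = C₀ (N * h) * h + C (N * h) * h ^ 2)
    (hC₀ : ∀ τ : ℝ, 0 ≤ τ → |C₀ τ| ≤ K * (1 + ‖x‖ ^ κ) * Real.exp (-l' * τ))
    (hC : ∀ τ : ℝ, 0 ≤ τ → |C τ| ≤ K * (1 + ‖x‖ ^ κ * Real.exp (-l' * τ))) :
    Filter.limsup (fun N : ℕ => |u (N * h) - v N|) Filter.atTop ≤ K * h ^ 2 :=
  second_order_ergodic_limit_from_expansion_general d κ h K l' hh hl' x u v C₀ C hexp hC₀ hC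
end
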